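/- arXiv:2403.10060 — 4 statements merged into one kernel-verified Lean document; each statement's English description precedes it below -/
import Mathlib

section
/- Let C := (sup_{y ∈ ℝ²} ‖X(y)‖)/(inf_{y ∈ ℝ²} ‖X(y)‖), which is finite and at least 1 since X is continuous, ℤ²-periodic and nowhere vanishing. Then for every x ∈ ℝ² and every n ∈ ℕ, C⁻¹ · λⁿ · ‖X(x)‖ ≤ ‖D(Fⁿ)(x)(X(x))‖ ≤ C · λⁿ · ‖X(x)‖, where D(Fⁿ)(x) denotes the Fréchet derivative of the n-th iterate of F at x. -/
noncomputable section

abbrev E2 : Type := EuclideanSpace ℝ (Fin 2)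

/-- Embedding of an integer vector into `ℝ²`. -/
def intVec (m : Fin 2 → ℤ) : E2 :=
  (WithLp.equiv 2 (Fin 2 → ℝ)).symm fun i => (m i : ℝ)

/-- Action of an integer matrix on `ℝ²`. -/
def matAct (A : Matrix (Fin 2) (Fin 2) ℤ) (x : E2) : E2 :=
  (WithLp.equiv 2 (Fin 2 → ℝ)).symm
    ((A.map (Int.cast : ℤ → ℝ)).mulVec ((WithLp.equiv 2 (Fin 2 → ℝ)) x))

/-- A `2×2` integer matrix is hyperbolic if none of its complex eigenvalues has modulus `1`. -/
def IsHyperbolicZ (A : Matrix (Fin 2) (Fin 2) ℤ) : Prop :=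
  ∀ μ : ℂ, (A.map (Int.cast : ℤ → ℂ)).charpoly.IsRoot μ → ‖μ‖ ≠ 1

/-!
Differentiating the conjugacy `F ∘ Φ t = Φ (λ t) ∘ F` at `t = 0` gives `DF(x) X(x) = λ X(F x)`, so
by the chain rule `D(Fⁿ)(x) X(x) = λⁿ X(Fⁿ x)`. The norm of the periodic, continuous, nowhere
vanishing field `X` lies in `[inf ‖X‖, sup ‖X‖]`, a compact subinterval of `(0, ∞)`, which gives
both bounds with the constant `sup ‖X‖ / inf ‖X‖`.
-/

open Set

def unitCube : Set E2 := (WithLp.equiv 2 (Fin 2 → ℝ)).symm '' Icc 0 1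

lemma isCompact_unitCube : IsCompact unitCube :=
  isCompact_Icc.image (PiLp.continuous_toLp 2 fun _ : Fin 2 => ℝ)

lemma exists_add_intVec_mem_unitCube (x : E2) : ∃ m : Fin 2 → ℤ, x + intVec m ∈ unitCube := by
  refine ⟨fun i => -⌊x i⌋, fun i => Int.fract (x i), ?_, ?_⟩
  · exact ⟨fun i => Int.fract_nonneg (x i), fun i => (Int.fract_lt_one (x i)).le⟩
  · ext i
    simp only [← Int.self_sub_floor, WithLp.equiv_symm_apply, intVec, Int.cast_neg,
      PiLp.add_apply]
    ring

lemma range_eq_image_unitCube_of_periodic {α : Type*} {g : E2 → α}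
    (hg : ∀ (x : E2) (m : Fin 2 → ℤ), g (x + intVec m) = g x) : range g = g '' unitCube := by
  refine Subset.antisymm ?_ (image_subset_range g unitCube)
  rintro _ ⟨x, rfl⟩
  obtain ⟨m, hm⟩ := exists_add_intVec_mem_unitCube x
  exact ⟨x + intVec m, hm, hg x m⟩

lemma isCompact_range_of_periodic {α : Type*} [TopologicalSpace α] {g : E2 → α}
    (hcont : Continuous g) (hg : ∀ (x : E2) (m : Fin 2 → ℤ), g (x + intVec m) = g x) :
    IsCompact (range g) := by
  rw [range_eq_image_unitCube_of_periodic hg]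
  exact isCompact_unitCube.image hcont

lemma iInf_pos_of_isCompact_range {ι : Type*} [Nonempty ι] {f : ι → ℝ}
    (hf : IsCompact (range f)) (hpos : ∀ i, 0 < f i) : 0 < ⨅ i, f i := by
  obtain ⟨i, hi⟩ := hf.sInf_mem (range_nonempty f)
  rw [iInf, ← hi]
  exact hpos i

section Conjugacy

variable {E : Type*} [NormedAddCommGroup E] [NormedSpace ℝ E]
  {Φ : ℝ → E → E} {X F : E → E} {lam : ℝ}

lemma fderiv_apply_eq_smul_of_comp_flow (hΦ0 : Φ 0 = id)
    (hX : ∀ x, HasDerivAt (fun t => Φ t x) (X x) 0) (hF : Differentiable ℝ F)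
    (hcomm : ∀ t, F ∘ Φ t = Φ (lam * t) ∘ F) (x : E) :
    fderiv ℝ F x (X x) = lam • X (F x) := by
  have hF' : HasFDerivAt F (fderiv ℝ F x) (Φ 0 x) := by
    rw [hΦ0]
    exact (hF x).hasFDerivAt
  have hleft : HasDerivAt (fun t => F (Φ t x)) (fderiv ℝ F x (X x)) 0 :=
    hF'.comp_hasDerivAt 0 (hX x)
  have hΦF : HasDerivAt (fun s => Φ s (F x)) (X (F x)) (lam * 0) := by
    simpa using hX (F x)
  have hright : HasDerivAt (fun t => Φ (lam * t) (F x)) (lam • X (F x)) 0 :=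
    hΦF.scomp 0 (by simpa using (hasDerivAt_id (0 : ℝ)).const_mul lam)
  have heq : (fun t => F (Φ t x)) = fun t => Φ (lam * t) (F x) :=
    funext fun t => congrFun (hcomm t) x
  rw [heq] at hleft
  exact hleft.unique hright

lemma fderiv_iterate_apply_eq_pow_smul (hΦ0 : Φ 0 = id)
    (hX : ∀ x, HasDerivAt (fun t => Φ t x) (X x) 0) (hF : Differentiable ℝ F)
    (hcomm : ∀ t, F ∘ Φ t = Φ (lam * t) ∘ F) (x : E) (n : ℕ) :
    fderiv ℝ (F^[n]) x (X x) = lam ^ n • X (F^[n] x) := by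
  induction n with
  | zero => simp
  | succ n ih =>
    rw [Function.iterate_succ', fderiv_comp x (hF _) ((hF.iterate n) x),
      ContinuousLinearMap.comp_apply, ih, map_smul,
      fderiv_apply_eq_smul_of_comp_flow hΦ0 hX hF hcomm, smul_smul, ← pow_succ,
      Function.comp_apply]

end Conjugacy

lemma inv_div_mul_le_mul_and_mul_le_div_mul {I S a b c : ℝ} (hI : 0 < I)
    (ha : a ∈ Icc I S) (hb : b ∈ Icc I S) (hc : 0 ≤ c) :
    (S / I)⁻¹ * c * a ≤ c * b ∧ c * b ≤ S / I * c * a := by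
  have hS : 0 < S := hI.trans_le (ha.1.trans ha.2)
  constructor
  · calc (S / I)⁻¹ * c * a ≤ (S / I)⁻¹ * c * S := by
          gcongr; exact ha.2
      _ = c * I := by field_simp
      _ ≤ c * b := by gcongr; exact hb.1
  · calc c * b ≤ c * S := by gcongr; exact hb.2
      _ = S / I * c * I := by field_simp
      _ ≤ S / I * c * a := by gcongr; exact ha.1

theorem stmt_3_general
    (lam : ℝ) (hlam : 1 < lam)
    (Φ : ℝ → E2 → E2)
    (hflow0 : Φ 0 = id)
    (X : E2 → E2)
    (hX : ∀ x : E2, HasDerivAt (fun t => Φ t x) (X x) 0)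
    (hXne : ∀ x : E2, X x ≠ 0)
    (hXcont : Continuous X)
    (hXper : ∀ (x : E2) (m : Fin 2 → ℤ), X (x + intVec m) = X x)
    (F : E2 → E2)
    (hF : ContDiff ℝ 2 F)
    (hcomm : ∀ t : ℝ, F ∘ Φ t = Φ (lam * t) ∘ F) :
    1 ≤ (⨆ y : E2, ‖X y‖) / (⨅ y : E2, ‖X y‖) ∧
    ∀ (x : E2) (n : ℕ),
      ((⨆ y : E2, ‖X y‖) / (⨅ y : E2, ‖X y‖))⁻¹ * lam ^ n * ‖X x‖ ≤
          ‖fderiv ℝ (F^[n]) x (X x)‖ ∧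
        ‖fderiv ℝ (F^[n]) x (X x)‖ ≤
          ((⨆ y : E2, ‖X y‖) / (⨅ y : E2, ‖X y‖)) * lam ^ n * ‖X x‖ := by
  have hrange : IsCompact (range fun y => ‖X y‖) :=
    isCompact_range_of_periodic hXcont.norm fun x m => by rw [hXper]
  have hbounds : ∀ y, ‖X y‖ ∈ Icc (⨅ y, ‖X y‖) (⨆ y, ‖X y‖) := fun y =>
    ⟨ciInf_le hrange.bddBelow y, le_ciSup hrange.bddAbove y⟩
  have hinf : 0 < ⨅ y, ‖X y‖ :=
    iInf_pos_of_isCompact_range hrange fun y => norm_pos_iff.mpr (hXne y)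
  refine ⟨(one_le_div hinf).2 ((hbounds 0).1.trans (hbounds 0).2), fun x n => ?_⟩
  have hlam_pow : 0 ≤ lam ^ n := pow_nonneg (zero_le_one.trans hlam.le) n
  rw [fderiv_iterate_apply_eq_pow_smul hflow0 hX (hF.differentiable two_ne_zero) hcomm,
    norm_smul, Real.norm_of_nonneg hlam_pow]
  exact inv_div_mul_le_mul_and_mul_le_div_mul hinf (hbounds x) (hbounds _) hlam_pow

/-- uniform bounds for the derivative of iterates along the flow direction. -/
theorem stmt_3
    (lam : ℝ) (hlam : 1 < lam)
    (Φ : ℝ → E2 → E2)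
    (hflow0 : Φ 0 = id)
    (hflow : ∀ s t : ℝ, Φ (s + t) = Φ s ∘ Φ t)
    (hΦsmooth : ContDiff ℝ 2 fun p : ℝ × E2 => Φ p.1 p.2)
    (hΦper : ∀ (t : ℝ) (x : E2) (m : Fin 2 → ℤ), Φ t (x + intVec m) = Φ t x + intVec m)
    (X : E2 → E2)
    (hX : ∀ x : E2, HasDerivAt (fun t => Φ t x) (X x) 0)
    (hXne : ∀ x : E2, X x ≠ 0)
    (hXcont : Continuous X)
    (hXper : ∀ (x : E2) (m : Fin 2 → ℤ), X (x + intVec m) = X x)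
    (A : Matrix (Fin 2) (Fin 2) ℤ)
    (hdet : A.det = 1 ∨ A.det = -1)
    (F Finv : E2 → E2)
    (hF : ContDiff ℝ 2 F) (hFinv : ContDiff ℝ 2 Finv)
    (hFinvF : Finv ∘ F = id) (hFFinv : F ∘ Finv = id)
    (hFlift : ∀ (x : E2) (m : Fin 2 → ℤ), F (x + intVec m) = F x + intVec (A.mulVec m))
    (hcomm : ∀ t : ℝ, F ∘ Φ t = Φ (lam * t) ∘ F) :
    1 ≤ (⨆ y : E2, ‖X y‖) / (⨅ y : E2, ‖X y‖) ∧
    ∀ (x : E2) (n : ℕ),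
      ((⨆ y : E2, ‖X y‖) / (⨅ y : E2, ‖X y‖))⁻¹ * lam ^ n * ‖X x‖ ≤
          ‖fderiv ℝ (F^[n]) x (X x)‖ ∧
        ‖fderiv ℝ (F^[n]) x (X x)‖ ≤
          ((⨆ y : E2, ‖X y‖) / (⨅ y : E2, ‖X y‖)) * lam ^ n * ‖X x‖ :=
  stmt_3_general lam hlam Φ hflow0 X hX hXne hXcont hXper F hF hcomm
end
end

section
/- There exist no x ∈ ℝ², T > 0 and m ∈ ℤ² with Φ T x = x + m. (Equivalently, the orbit foliation on the torus T² = ℝ²/ℤ² of the flow induced by Φ has no closed leaves: the induced flow on T² has no periodic orbits.) -/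
noncomputable section

/-!
Pulling a periodic orbit back by `F`, which rescales time by `λ` and preserves the lattice `ℤ²`
because `A` is unimodular, gives periodic orbits (modulo `ℤ²`) of period `T / λⁿ` for every `n`,
and a lattice translate of each meets the compact ball of radius `2`. But on a compact set a
nonvanishing vector field moves every point, in a short positive time `s`, by approximately
`s • X z`: a displacement of norm strictly between `0` and `1`, hence not a lattice vector.
-/

open Set Filter Topology Metric

section Flow

variable {E : Type*} [NormedAddCommGroup E] [NormedSpace ℝ E] {Φ : ℝ → E → E} {X : E → E}

theorem hasDerivAt_flow (hflow : ∀ s t : ℝ, Φ (s + t) = Φ s ∘ Φ t)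
    (hX : ∀ x : E, HasDerivAt (fun t => Φ t x) (X x) 0) (z : E) (t : ℝ) :
    HasDerivAt (fun u => Φ u z) (X (Φ t z)) t := by
  have h := HasDerivAt.comp_sub_const t t (by rw [sub_self]; exact hX (Φ t z))
  convert h using 1
  funext u
  rw [← Function.comp_apply (f := Φ (u - t)), ← hflow, sub_add_cancel]

theorem norm_flow_sub_sub_smul_le (hflow0 : Φ 0 = id) (hflow : ∀ s t : ℝ, Φ (s + t) = Φ s ∘ Φ t)
    (hX : ∀ x : E, HasDerivAt (fun t => Φ t x) (X x) 0) {z v : E} {s C : ℝ} (hs : 0 ≤ s)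
    (hC : ∀ u ∈ Icc 0 s, ‖X (Φ u z) - v‖ ≤ C) :
    ‖Φ s z - z - s • v‖ ≤ C * s := by
  have hderiv : ∀ u ∈ Icc 0 s,
      HasDerivWithinAt (fun u => Φ u z - u • v) (X (Φ u z) - v) (Icc 0 s) u := fun u _ => by
    simpa using ((hasDerivAt_flow hflow hX z u).fun_sub
      ((hasDerivAt_id u).smul_const v)).hasDerivWithinAt
  have h := norm_image_sub_le_of_norm_deriv_le_segment' hderiv
    (fun u hu => hC u (Ico_subset_Icc_self hu)) s ⟨hs, le_rfl⟩
  simpa only [hflow0, id, zero_smul, sub_zero, sub_right_comm] using h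

theorem eventually_norm_flow_sub_mem_Ioo (hflow0 : Φ 0 = id)
    (hflow : ∀ s t : ℝ, Φ (s + t) = Φ s ∘ Φ t) (hΦ : Continuous fun p : ℝ × E => Φ p.1 p.2)
    (hX : ∀ x : E, HasDerivAt (fun t => Φ t x) (X x) 0) (hXc : Continuous X) {z₀ : E}
    (hz₀ : X z₀ ≠ 0) :
    ∀ᶠ p : ℝ × E in 𝓝 (0, z₀), 0 < p.1 → ‖Φ p.1 p.2 - p.2‖ ∈ Ioo 0 1 := by
  set v := X z₀
  have hv : 0 < ‖v‖ := norm_pos_iff.mpr hz₀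
  have hcont : ContinuousAt (fun p : ℝ × E => X (Φ p.1 p.2)) (0, z₀) :=
    (hXc.comp hΦ).continuousAt
  obtain ⟨δ, hδ, hnear⟩ := Metric.continuousAt_iff.mp hcont (‖v‖ / 2) (by positivity)
  -- `Φ s z - z` stays within `s‖v‖/2` of `s • v`, so its norm lies in `(0, 3/4)` once
  -- `s < 1 / (2‖v‖)`.
  filter_upwards [ball_mem_nhds (0, z₀) (lt_min hδ (by positivity : 0 < 1 / (2 * ‖v‖)))]
    with ⟨s, z⟩ hsz hs
  simp only [mem_ball, Prod.dist_eq, max_lt_iff, lt_min_iff, Real.dist_0_eq_abs,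
    abs_of_pos hs] at hsz hs ⊢
  obtain ⟨⟨hsδ, hzδ⟩, hsv, -⟩ := hsz
  have hC : ∀ u ∈ Icc 0 s, ‖X (Φ u z) - v‖ ≤ ‖v‖ / 2 := by
    rintro u ⟨hu0, hus⟩
    have h := @hnear (u, z) (by
      simp only [Prod.dist_eq, Real.dist_0_eq_abs, abs_of_nonneg hu0, max_lt_iff]
      exact ⟨hus.trans_lt hsδ, hzδ⟩)
    rw [hflow0, id, dist_eq_norm] at h
    exact h.le
  have hdev := norm_flow_sub_sub_smul_le hflow0 hflow hX hs.le hC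
  have hsv' : s * (2 * ‖v‖) < 1 := (lt_div_iff₀ (by positivity)).mp hsv
  have h := abs_le.mp ((abs_norm_sub_norm_le (Φ s z - z) (s • v)).trans hdev)
  rw [norm_smul, Real.norm_of_nonneg hs.le] at h
  constructor <;> nlinarith

end Flow

theorem intVec_eq_zero_of_norm_lt_one {m : Fin 2 → ℤ} (h : ‖intVec m‖ < 1) : m = 0 := by
  funext i
  have hi : |(m i : ℝ)| < 1 := by
    simpa [intVec, Real.norm_eq_abs] using (PiLp.norm_apply_le (intVec m) i).trans_lt h
  exact_mod_cast Int.abs_lt_one_iff.mp (by exact_mod_cast hi)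

theorem exists_sub_intVec_mem_closedBall (y : E2) :
    ∃ k : Fin 2 → ℤ, y - intVec k ∈ closedBall 0 2 := by
  refine ⟨fun i => ⌊y i⌋, ?_⟩
  have hfract : ∀ i, (y - intVec fun i => ⌊y i⌋) i = Int.fract (y i) := fun i => rfl
  rw [mem_closedBall_zero_iff, EuclideanSpace.norm_eq, Real.sqrt_le_left zero_le_two,
    Fin.sum_univ_two, hfract, hfract]
  have h0 := Int.fract_nonneg (y 0)
  have h0' := Int.fract_lt_one (y 0)
  have h1 := Int.fract_nonneg (y 1)
  have h1' := Int.fract_lt_one (y 1)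
  simp only [Real.norm_eq_abs, sq_abs]
  nlinarith

/-- `x` projects to a point of period `t` of the flow induced by `Φ` on `ℝ² / ℤ²`. -/
def IsTorusPeriodicPt (Φ : ℝ → E2 → E2) (t : ℝ) (x : E2) : Prop :=
  ∃ m : Fin 2 → ℤ, Φ t x = x + intVec m

namespace IsTorusPeriodicPt

variable {Φ : ℝ → E2 → E2} {t : ℝ} {x : E2}

theorem sub_intVec
    (hΦper : ∀ (t : ℝ) (x : E2) (m : Fin 2 → ℤ), Φ t (x + intVec m) = Φ t x + intVec m)
    (h : IsTorusPeriodicPt Φ t x) (k : Fin 2 → ℤ) : IsTorusPeriodicPt Φ t (x - intVec k) := by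
  obtain ⟨m, hm⟩ := h
  refine ⟨m, ?_⟩
  have hk := hΦper t (x - intVec k) k
  rw [sub_add_cancel, hm] at hk
  rw [eq_sub_of_add_eq hk.symm]
  abel

theorem of_semiconj {lam : ℝ} {A : Matrix (Fin 2) (Fin 2) ℤ} {F : E2 → E2}
    (hA : IsUnit A.det) (hF : Function.Injective F)
    (hFlift : ∀ (x : E2) (m : Fin 2 → ℤ), F (x + intVec m) = F x + intVec (A.mulVec m))
    (hcomm : ∀ t : ℝ, F ∘ Φ t = Φ (lam * t) ∘ F)
    (h : IsTorusPeriodicPt Φ (lam * t) (F x)) : IsTorusPeriodicPt Φ t x := by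
  obtain ⟨m, hm⟩ := h
  refine ⟨A⁻¹.mulVec m, hF ?_⟩
  rw [hFlift, Matrix.mulVec_mulVec, Matrix.mul_nonsing_inv A hA, Matrix.one_mulVec, ← hm,
    ← Function.comp_apply (f := F), hcomm, Function.comp_apply]

end IsTorusPeriodicPt

theorem exists_isTorusPeriodicPt_div_pow {Φ : ℝ → E2 → E2} {lam T : ℝ} (hlam : lam ≠ 0)
    {A : Matrix (Fin 2) (Fin 2) ℤ} {F : E2 → E2} (hA : IsUnit A.det)
    (hF : Function.Bijective F)
    (hFlift : ∀ (x : E2) (m : Fin 2 → ℤ), F (x + intVec m) = F x + intVec (A.mulVec m))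
    (hcomm : ∀ t : ℝ, F ∘ Φ t = Φ (lam * t) ∘ F) {x : E2} (hx : IsTorusPeriodicPt Φ T x) :
    ∀ n : ℕ, ∃ y, IsTorusPeriodicPt Φ (T / lam ^ n) y
  | 0 => ⟨x, by simpa using hx⟩
  | n + 1 => by
    obtain ⟨y, hy⟩ := exists_isTorusPeriodicPt_div_pow hlam hA hF hFlift hcomm hx n
    obtain ⟨y', rfl⟩ := hF.2 y
    have hperiod : T / lam ^ n = lam * (T / lam ^ (n + 1)) := by
      field_simp
      ring
    exact ⟨y', (hperiod ▸ hy).of_semiconj hA hF.1 hFlift hcomm⟩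

theorem stmt_5_general
    (lam : ℝ) (hlam : 1 < lam)
    (Φ : ℝ → E2 → E2)
    (hflow0 : Φ 0 = id)
    (hflow : ∀ s t : ℝ, Φ (s + t) = Φ s ∘ Φ t)
    (hΦsmooth : ContDiff ℝ 2 fun p : ℝ × E2 => Φ p.1 p.2)
    (hΦper : ∀ (t : ℝ) (x : E2) (m : Fin 2 → ℤ), Φ t (x + intVec m) = Φ t x + intVec m)
    (X : E2 → E2)
    (hX : ∀ x : E2, HasDerivAt (fun t => Φ t x) (X x) 0)
    (hXne : ∀ x : E2, X x ≠ 0)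
    (hXcont : Continuous X)
    (A : Matrix (Fin 2) (Fin 2) ℤ)
    (hdet : A.det = 1 ∨ A.det = -1)
    (F Finv : E2 → E2)
    (hFinvF : Finv ∘ F = id) (hFFinv : F ∘ Finv = id)
    (hFlift : ∀ (x : E2) (m : Fin 2 → ℤ), F (x + intVec m) = F x + intVec (A.mulVec m))
    (hcomm : ∀ t : ℝ, F ∘ Φ t = Φ (lam * t) ∘ F) :
    ¬ ∃ (x : E2) (T : ℝ) (m : Fin 2 → ℤ), 0 < T ∧ Φ T x = x + intVec m := by
  rintro ⟨x, T, m, hT, hx⟩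
  have hF : Function.Bijective F :=
    ⟨Function.LeftInverse.injective (congrFun hFinvF),
      Function.RightInverse.surjective (congrFun hFFinv)⟩
  have hshort : ∀ᶠ s in 𝓝 0, ∀ z ∈ closedBall (0 : E2) 2, 0 < s → ‖Φ s z - z‖ ∈ Ioo 0 1 :=
    (isCompact_closedBall 0 2).eventually_forall_of_forall_eventually fun z₀ _ =>
      eventually_norm_flow_sub_mem_Ioo hflow0 hflow hΦsmooth.continuous hX hXcont (hXne z₀)
  have hperiods : Tendsto (fun n : ℕ => T / lam ^ n) atTop (𝓝 0) :=
    tendsto_const_nhds.div_atTop (tendsto_pow_atTop_atTop_of_one_lt hlam)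
  obtain ⟨n, hn⟩ := (hperiods.eventually hshort).exists
  obtain ⟨y, hy⟩ := exists_isTorusPeriodicPt_div_pow (by positivity) (Int.isUnit_iff.mpr hdet) hF
    hFlift hcomm ⟨m, hx⟩ n
  obtain ⟨k, hk⟩ := exists_sub_intVec_mem_closedBall y
  obtain ⟨m', hm'⟩ := hy.sub_intVec hΦper k
  have hmove := hn _ hk (by positivity)
  rw [hm', add_sub_cancel_left] at hmove
  rw [intVec_eq_zero_of_norm_lt_one hmove.2] at hmove
  exact hmove.1.ne' (by simp [intVec, Pi.zero_def])

/-- the induced flow on the torus has no periodic orbits. -/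
theorem stmt_5
    (lam : ℝ) (hlam : 1 < lam)
    (Φ : ℝ → E2 → E2)
    (hflow0 : Φ 0 = id)
    (hflow : ∀ s t : ℝ, Φ (s + t) = Φ s ∘ Φ t)
    (hΦsmooth : ContDiff ℝ 2 fun p : ℝ × E2 => Φ p.1 p.2)
    (hΦper : ∀ (t : ℝ) (x : E2) (m : Fin 2 → ℤ), Φ t (x + intVec m) = Φ t x + intVec m)
    (X : E2 → E2)
    (hX : ∀ x : E2, HasDerivAt (fun t => Φ t x) (X x) 0)
    (hXne : ∀ x : E2, X x ≠ 0)
    (hXcont : Continuous X)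
    (hXper : ∀ (x : E2) (m : Fin 2 → ℤ), X (x + intVec m) = X x)
    (A : Matrix (Fin 2) (Fin 2) ℤ)
    (hdet : A.det = 1 ∨ A.det = -1)
    (F Finv : E2 → E2)
    (hF : ContDiff ℝ 2 F) (hFinv : ContDiff ℝ 2 Finv)
    (hFinvF : Finv ∘ F = id) (hFFinv : F ∘ Finv = id)
    (hFlift : ∀ (x : E2) (m : Fin 2 → ℤ), F (x + intVec m) = F x + intVec (A.mulVec m))
    (hcomm : ∀ t : ℝ, F ∘ Φ t = Φ (lam * t) ∘ F) :
    ¬ ∃ (x : E2) (T : ℝ) (m : Fin 2 → ℤ), 0 < T ∧ Φ T x = x + intVec m :=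
  stmt_5_general lam hlam Φ hflow0 hflow hΦsmooth hΦper X hX hXne hXcont A hdet F Finv hFinvF hFFinv
    hFlift hcomm
end
end

section
/- For every t ∈ ℝ, ‖Z(Ψ t 0)‖ = ‖Z(0)‖: the speed of the flow Ψ is constant along the orbit of the fixed point 0 of A. -/
/-!
Write `w t = Z (Ψ t 0)`. Differentiating `A (Ψ t 0) = Ψ (λ t) 0` gives `A (w t) = λ • w (λ t)`,
and since `w t` is parallel to the eigenvector `v`, also `A (w t) = λ • w t`; hence `w (λ t) = w t`.
A continuous function invariant under the dilation `t ↦ λ t` with `|λ| > 1` is constant, because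
`t / λⁿ → 0`. So `w` is constant, and `w 0 = Z 0` as `Ψ 0 = id`.
-/

noncomputable section

open Filter Topology

theorem eq_apply_zero_of_apply_mul_eq {X : Type*} [TopologicalSpace X] [T2Space X]
    {f : ℝ → X} {lam : ℝ} (hlam : 1 < |lam|) (hf : ContinuousAt f 0)
    (hscale : ∀ t, f (lam * t) = f t) (t : ℝ) : f t = f 0 := by
  have hlam0 : lam ≠ 0 := abs_pos.mp (one_pos.trans hlam)
  have hiter : ∀ n : ℕ, f (t * lam⁻¹ ^ n) = f t := by
    intro n
    induction n with
    | zero => simp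
    | succ n ih =>
      rw [← ih, ← hscale, pow_succ', mul_left_comm, mul_inv_cancel_left₀ hlam0]
  have hshrink : Tendsto (fun n : ℕ => t * lam⁻¹ ^ n) atTop (𝓝 0) := by
    simpa only [mul_zero] using (tendsto_pow_atTop_nhds_zero_of_abs_lt_one
      (by rwa [abs_inv, inv_lt_one₀ (one_pos.trans hlam)])).const_mul t
  have hlim := hf.tendsto.comp hshrink
  simp only [Function.comp_def, hiter] at hlim
  exact tendsto_nhds_unique tendsto_const_nhds hlim

section Flow

variable {E : Type*} [NormedAddCommGroup E] [NormedSpace ℝ E]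
  {Ψ : ℝ → E → E} {Z : E → E}

theorem hasDerivAt_flow_apply (hflow : ∀ s t : ℝ, Ψ (s + t) = Ψ s ∘ Ψ t)
    (hZ : ∀ x : E, HasDerivAt (fun t => Ψ t x) (Z x) 0) (x : E) (t : ℝ) :
    HasDerivAt (fun s => Ψ s x) (Z (Ψ t x)) t := by
  have hshift := HasDerivAt.comp_sub_const t t ((sub_self t).symm ▸ hZ (Ψ t x))
  convert hshift using 2 with s
  rw [← Function.comp_apply (f := Ψ (s - t)), ← hflow, sub_add_cancel]

theorem vectorField_flow_mul_map_eq {A : E →L[ℝ] E} {lam : ℝ} (hlam : lam ≠ 0)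
    (hflow : ∀ s t : ℝ, Ψ (s + t) = Ψ s ∘ Ψ t)
    (hZ : ∀ x : E, HasDerivAt (fun t => Ψ t x) (Z x) 0)
    (hcomm : ∀ (t : ℝ) (x : E), A (Ψ t x) = Ψ (lam * t) (A x))
    (hAZ : ∀ x : E, A (Z x) = lam • Z x) (x : E) (t : ℝ) :
    Z (Ψ (lam * t) (A x)) = Z (Ψ t x) := by
  have hleft : HasDerivAt (fun s => A (Ψ s x)) (A (Z (Ψ t x))) t :=
    A.hasFDerivAt.comp_hasDerivAt t (hasDerivAt_flow_apply hflow hZ x t)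
  have hright : HasDerivAt (fun s => Ψ (lam * s) (A x)) (lam • Z (Ψ (lam * t) (A x))) t :=
    (hasDerivAt_flow_apply hflow hZ (A x) (lam * t)).scomp t
      (by simpa using (hasDerivAt_id t).const_mul lam)
  simp only [hcomm] at hleft
  have h := hleft.unique hright
  rw [hAZ] at h
  exact (smul_right_injective E hlam h).symm

end Flow

theorem stmt_15_general (lam : ℝ) (hlam : 1 < lam)
    (A : E2 →L[ℝ] E2) (v : E2) (hv : A v = lam • v)
    (Ψ : ℝ → E2 → E2)
    (hflow0 : Ψ 0 = id)
    (hflow : ∀ s t : ℝ, Ψ (s + t) = Ψ s ∘ Ψ t)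
    (Z : E2 → E2)
    (hZ : ∀ x : E2, HasDerivAt (fun t => Ψ t x) (Z x) 0)
    (hZcont : Continuous Z)
    (hZv : ∀ x : E2, ∃ c : ℝ, Z x = c • v)
    (hcomm : ∀ (t : ℝ) (x : E2), A (Ψ t x) = Ψ (lam * t) (A x)) :
    ∀ t : ℝ, ‖Z (Ψ t 0)‖ = ‖Z 0‖ := by
  intro t
  have hAZ : ∀ x, A (Z x) = lam • Z x := by
    intro x
    obtain ⟨c, hc⟩ := hZv x
    rw [hc, map_smul, hv, smul_comm]
  have hscale (s : ℝ) : Z (Ψ (lam * s) 0) = Z (Ψ s 0) := by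
    simpa using vectorField_flow_mul_map_eq (by positivity) hflow hZ hcomm hAZ 0 s
  have hcont : ContinuousAt (fun s => Z (Ψ s 0)) 0 :=
    hZcont.continuousAt.comp (hasDerivAt_flow_apply hflow hZ 0 0).continuousAt
  have hconst := eq_apply_zero_of_apply_mul_eq (by rwa [abs_of_pos (by positivity)]) hcont hscale t
  simp only [hconst, hflow0, id]

/-- the speed of the flow `Ψ` is constant along the orbit of `0`. -/
theorem stmt_15 (lam : ℝ) (hlam : 1 < lam)
    (A : E2 →L[ℝ] E2) (v : E2) (hv : A v = lam • v)
    (Ψ : ℝ → E2 → E2)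
    (hflow0 : Ψ 0 = id)
    (hflow : ∀ s t : ℝ, Ψ (s + t) = Ψ s ∘ Ψ t)
    (hcont : Continuous fun p : ℝ × E2 => Ψ p.1 p.2)
    (Z : E2 → E2)
    (hZ : ∀ x : E2, HasDerivAt (fun t => Ψ t x) (Z x) 0)
    (hZcont : Continuous Z)
    (hZv : ∀ x : E2, ∃ c : ℝ, Z x = c • v)
    (hcomm : ∀ (t : ℝ) (x : E2), A (Ψ t x) = Ψ (lam * t) (A x)) :
    ∀ t : ℝ, ‖Z (Ψ t 0)‖ = ‖Z 0‖ :=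
  stmt_15_general lam hlam A v hv Ψ hflow0 hflow Z hZ hZcont hZv hcomm
end
end

section
/- The set {t • v + m : t ∈ ℝ, m ∈ ℤ²} is dense in ℝ²; equivalently, the projection to the torus T² = ℝ²/ℤ² of the eigenline ℝ • v of A is dense in T². -/
noncomputable section

/-!
The eigenvalue `λ` is a root of the monic integer polynomial `charpoly A`, whose constant term
`± det A` is a unit. By the integral root theorem a rational root would be an integer dividing
`± 1`, which `|λ| > 1` excludes; so `λ` is irrational, and so is the slope `s = v₁ / v₀` of the
eigenline, since `λ = a₀₀ + a₀₁ s`. The functional `y ↦ y₁ - s y₀` is an open map which kills `v`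
and maps `ℤ²` onto `ℤ s + ℤ`, a dense subgroup of `ℝ`; the eigenline plus `ℤ²` is the preimage of
that subgroup, hence dense.
-/

open Polynomial Matrix

theorem Polynomial.Monic.irrational_of_aeval_eq_zero {p : ℤ[X]} (hp : p.Monic)
    (hp0 : IsUnit (p.coeff 0)) {x : ℝ} (hx : aeval x p = 0) (hx1 : 1 < |x|) : Irrational x := by
  rintro ⟨q, rfl⟩
  have hq : aeval q p = 0 := by
    rwa [← Rat.cast_eq_zero (α := ℝ), ← eq_ratCast (algebraMap ℚ ℝ), ← aeval_algebraMap_apply,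
      eq_ratCast]
  obtain ⟨n, rfl, hn⟩ := exists_integer_of_is_root_of_monic hp hq
  have hn1 : |n| = 1 := Int.isUnit_iff_abs_eq.mp (isUnit_of_dvd_unit hn hp0)
  simp [← Int.cast_abs, hn1] at hx1

theorem Matrix.isRoot_charpoly_of_mulVec_eq_smul {n K : Type*} [Fintype n] [DecidableEq n]
    [Field K] {M : Matrix n n K} {w : n → K} (hw : w ≠ 0) {μ : K} (h : M *ᵥ w = μ • w) :
    M.charpoly.IsRoot μ := by
  rw [IsRoot, eval_charpoly, ← exists_mulVec_eq_zero_iff]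
  exact ⟨w, hw, by simp [sub_mulVec, h, scalar_apply]⟩

theorem Matrix.irrational_of_mulVec_eq_smul {n : Type*} [Fintype n] [DecidableEq n]
    {A : Matrix n n ℤ} (hA : IsUnit A.det) {w : n → ℝ} (hw : w ≠ 0) {μ : ℝ}
    (h : A.map (Int.cast : ℤ → ℝ) *ᵥ w = μ • w) (hμ : 1 < |μ|) : Irrational μ := by
  refine A.charpoly_monic.irrational_of_aeval_eq_zero ?_ ?_ hμ
  · rw [det_eq_sign_charpoly_coeff] at hA
    exact isUnit_of_mul_isUnit_right hA
  · rw [aeval_def, eval₂_eq_eval_map, ← charpoly_map]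
    exact isRoot_charpoly_of_mulVec_eq_smul hw h

theorem Matrix.irrational_slope_of_mulVec_eq_smul {A : Matrix (Fin 2) (Fin 2) ℤ} {w : Fin 2 → ℝ}
    (hw : w ≠ 0) {μ : ℝ} (h : A.map (Int.cast : ℤ → ℝ) *ᵥ w = μ • w) (hμ : Irrational μ) :
    w 0 ≠ 0 ∧ Irrational (w 1 / w 0) := by
  have h0 : A 0 0 * w 0 + A 0 1 * w 1 = μ * w 0 := by
    simpa [mulVec, dotProduct, Fin.sum_univ_two] using congrFun h 0
  have h1 : A 1 0 * w 0 + A 1 1 * w 1 = μ * w 1 := by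
    simpa [mulVec, dotProduct, Fin.sum_univ_two] using congrFun h 1
  have hw0 : w 0 ≠ 0 := by
    intro hw0
    have hw1 : w 1 ≠ 0 := fun hw1 => hw (by ext i; fin_cases i <;> assumption)
    rw [hw0] at h1
    exact hμ.ne_int (A 1 1) (mul_right_cancel₀ hw1 (by linarith)).symm
  refine ⟨hw0, (Irrational.of_intCast_add (A 0 0) ?_).of_intCast_mul (A 0 1)⟩
  convert hμ using 1
  field_simp
  linarith

theorem dense_setOf_smul_add_intVec {v : E2} (hv : v 0 ≠ 0) (hs : Irrational (v 1 / v 0)) :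
    Dense {y : E2 | ∃ (t : ℝ) (m : Fin 2 → ℤ), y = t • v + intVec m} := by
  set s := v 1 / v 0
  have hG : Dense (AddSubgroup.closure {s, 1} : Set ℝ) :=
    dense_addSubgroupClosure_pair_iff.mpr (by simpa using hs)
  let f : E2 →L[ℝ] ℝ := EuclideanSpace.proj 1 - s • EuclideanSpace.proj 0
  have hf : IsOpenMap f := f.toLinearMap.isOpenMap_of_finiteDimensional fun x =>
    ⟨EuclideanSpace.single 1 x, by simp [f]⟩
  refine (hG.preimage hf).mono ?_
  intro y hy
  obtain ⟨a, b, hy⟩ := AddSubgroup.mem_closure_pair.mp hy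
  refine ⟨(y 0 + a) / v 0, ![-a, b], ?_⟩
  replace hy : a * s + b = y 1 - s * y 0 := by simpa [f] using hy
  ext i
  fin_cases i
  · show y 0 = (y 0 + a) / v 0 * v 0 + (-a : ℤ)
    rw [div_mul_cancel₀ _ hv]
    push_cast
    ring
  · show y 1 = (y 0 + a) / v 0 * v 1 + b
    rw [div_mul_comm]
    linear_combination -hy

/-- the eigenline of the unstable eigenvalue projects densely to the torus. -/
theorem stmt_16 (A : Matrix (Fin 2) (Fin 2) ℤ) (hdet : A.det = 1 ∨ A.det = -1)
    (lam : ℝ) (hlam : 1 < |lam|)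
    (v : E2) (hv0 : v ≠ 0) (hv : matAct A v = lam • v) :
    Dense {y : E2 | ∃ (t : ℝ) (m : Fin 2 → ℤ), y = t • v + intVec m} := by
  have hw : v.ofLp ≠ 0 := fun h => hv0 (by simpa using congrArg (WithLp.toLp 2) h)
  have heig : A.map (Int.cast : ℤ → ℝ) *ᵥ v.ofLp = lam • v.ofLp := by
    simpa [matAct] using congrArg WithLp.ofLp hv
  have hirr := A.irrational_of_mulVec_eq_smul (Int.isUnit_iff.mpr hdet) hw heig hlam
  obtain ⟨hvx, hs⟩ := A.irrational_slope_of_mulVec_eq_smul hw heig hirr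
  exact dense_setOf_smul_add_intVec hvx hs
end
end
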